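/- Let B = D_1∘…∘D_m be a ROBP where each D_i is a width-3 ROBP with at most 2 vertices on its first and last layers; interpret the value of a program with two start vertices on input x as the average of the ±1 outcomes of the two computation paths from its two start vertices. Then for every j ∈ {2,…,m}, B(x) = (D_j∘…∘D_m)(x) + E(x) where the error term E satisfies |E(x)| ≤ ∧_{i=j}^m ¬FCol_i(x) for every x, with FCol_i(x) denoting the {0,1}-indicator of the event that on input x the two computation paths in D_i collide at the first vertex of D_i at which a collision is possible. -/

import Mathlib

/-! Write `o_t(u)` for the `±1` outcome of the computation path from vertex `u` of layer `t`.
Every suffix value is the average of `o_t` over `V t`, and `o_s(u) = o_t(u')` for the vertex `u'`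
that the path from `u` reaches at layer `t ≥ s`. Hence if `o_t` is constant on `V t`, all suffix
values from layers `s ≤ t` coincide. Otherwise the boundary layer `V (cut c)`, having at most two
vertices, consists of two vertices of opposite outcome, the suffix value there is `0`, and the error
is at most `|B(x)| ≤ 1`. A first collision in a later block `(cut k, cut (k+1)]` merges all paths
from `V (cut k)` into one, so `o` is constant on `V (cut k)` and the error vanishes. -/

open Finset

/-- Uniform-distribution expectation of `f` over a finite type. -/
noncomputable def uexp {α : Type*} [Fintype α] (f : α → ℝ) : ℝ :=
  (∑ x : α, f x) / (Fintype.card α : ℝ)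

/-- Variance under the uniform distribution. -/
noncomputable def uvar {α : Type*} [Fintype α] (f : α → ℝ) : ℝ :=
  uexp (fun x => f x ^ 2) - (uexp f) ^ 2

open Classical in
/-- Real-valued indicator of a proposition. -/
noncomputable def ind (P : Prop) : ℝ := if P then 1 else 0

/-- `sel T x y` agrees with `x` on `T` and with `y` outside of `T`. -/
def sel {n : ℕ} (T : Finset (Fin n)) (x y : Fin n → Bool) : Fin n → Bool :=
  fun i => if i ∈ T then x i else y i

/-- The bias function of `f` with respect to the set `T` of live coordinates. -/
noncomputable def biasFn {n : ℕ} (T : Finset (Fin n)) (f : (Fin n → Bool) → ℝ) :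
    (Fin n → Bool) → ℝ :=
  fun x => uexp (fun y : Fin n → Bool => f (sel T x y))

/-- A layered read-once branching program of width `w` and length `n`.
`V i` is the set of vertices of layer `i`; the Boolean `true` corresponds to the
edge label `1` and `false` to the edge label `-1`; the program outputs `-1` iff it
accepts. -/
structure ROBP (w n : ℕ) where
  V : Fin (n + 1) → Finset (Fin w)
  V_nonempty : ∀ i, (V i).Nonempty
  start : Fin w
  start_mem : start ∈ V 0
  trans : Fin n → Bool → Fin w → Fin w
  trans_mem : ∀ (i : Fin n) (b : Bool) (v : Fin w), v ∈ V i.castSucc → trans i b v ∈ V i.succ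
  accept : Fin w → Bool

namespace ROBP

variable {w n : ℕ}

/-- The state reached at layer `j` when starting from state `v` at layer `i`. -/
def runTo (B : ROBP w n) (x : Fin n → Bool) (v : Fin w) (i j : ℕ) : Fin w :=
  if h : i < j ∧ i < n then runTo B x (B.trans ⟨i, h.2⟩ (x ⟨i, h.2⟩) v) (i + 1) j else v
termination_by j - i
decreasing_by omega

/-- The final state on input `x`, starting from the start vertex. -/
def run (B : ROBP w n) (x : Fin n → Bool) : Fin w := B.runTo x B.start 0 n

/-- The `±1` value computed by `B` on `x` (`-1` means accept). -/
noncomputable def eval (B : ROBP w n) (x : Fin n → Bool) : ℝ :=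
  if B.accept (B.run x) then -1 else 1

/-- Probability (over a uniformly random input) of reaching vertex `v` at layer `j`. -/
noncomputable def reachProb (B : ROBP w n) (j : ℕ) (v : Fin w) : ℝ :=
  uexp (fun x : Fin n → Bool => if B.runTo x B.start 0 j = v then (1 : ℝ) else 0)

/-- Acceptance probability starting from vertex `v` at layer `i`, on a uniform input. -/
noncomputable def beta (B : ROBP w n) (i : ℕ) (v : Fin w) : ℝ :=
  uexp (fun x : Fin n → Bool => if B.accept (B.runTo x v i n) then (1 : ℝ) else 0)

/-- Layer `i` of edges is colliding: two distinct vertices of layer `i` have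
equally-labeled edges entering the same vertex of layer `i+1`. -/
def Colliding (B : ROBP w n) (i : Fin n) : Prop :=
  ∃ (b : Bool) (u v : Fin w), u ∈ B.V i.castSucc ∧ v ∈ B.V i.castSucc ∧ u ≠ v ∧
    B.trans i b u = B.trans i b v

/-- The number of colliding layers of `B`. -/
noncomputable def collidingCount (B : ROBP w n) : ℕ :=
  Nat.card {i : Fin n // B.Colliding i}

/-- The value of `B` on `x` when all vertices of `V 0` are interpreted as start
vertices: the average of the `±1` outcomes of the corresponding computation paths. -/
noncomputable def avgEval (B : ROBP w n) (x : Fin n → Bool) : ℝ :=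
  (∑ v ∈ B.V 0, (if B.accept (B.runTo x v 0 n) then (-1 : ℝ) else 1)) / ((B.V 0).card : ℝ)

/-- The averaged value of the suffix of `B` starting at layer `t`, whose start-vertex
set is `V t`. -/
noncomputable def suffixEval (B : ROBP w n) (t : Fin (n + 1)) (x : Fin n → Bool) : ℝ :=
  (∑ v ∈ B.V t, (if B.accept (B.runTo x v (t : ℕ) n) then (-1 : ℝ) else 1)) /
    ((B.V t).card : ℝ)

/-- `B` is a `(w, ℓ, m)`-ROBP: it can be written as a concatenation of `m` consecutive
blocks, each block boundary layer having at most `2` vertices and each block having at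
most `ℓ` colliding layers. -/
def IsDecomp (B : ROBP w n) (ℓ m : ℕ) : Prop :=
  ∃ cut : Fin (m + 1) → Fin (n + 1),
    Monotone cut ∧ cut 0 = 0 ∧ cut (Fin.last m) = Fin.last n ∧
    (∀ j, (B.V (cut j)).card ≤ 2) ∧
    (∀ j : Fin m,
      Nat.card {i : Fin n //
        (cut j.castSucc : ℕ) ≤ (i : ℕ) ∧ (i : ℕ) < (cut j.succ : ℕ) ∧ B.Colliding i} ≤ ℓ)

end ROBP

/-- `G` is a pseudorandom generator that `ε`-fools the real-valued function `f`. -/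
def fools {r n : ℕ} (G : (Fin r → Bool) → (Fin n → Bool)) (f : (Fin n → Bool) → ℝ)
    (ε : ℝ) : Prop :=
  |uexp f - uexp (fun s => f (G s))| ≤ ε

/-- Expectation of `f` under the distribution with mass function `μ`. -/
noncomputable def dExp {α : Type*} [Fintype α] (μ f : α → ℝ) : ℝ :=
  ∑ x : α, μ x * f x

/-- The event that, on input `x`, the computation paths starting from all the start
vertices `V a` of the block of layers `(a, b]` collide at the first vertex at which a
collision is possible within the block. -/
def ROBP.FColEvent {w n : ℕ} (B : ROBP w n) (a b : Fin (n + 1))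
    (x : Fin n → Bool) : Prop :=
  ∃ (t : ℕ) (v : Fin w),
    (a : ℕ) < t ∧ t ≤ (b : ℕ) ∧
    (∀ (t' : ℕ) (v' : Fin w), (a : ℕ) < t' → t' < t →
      ¬ ∃ y : Fin n → Bool, ∀ u ∈ B.V a, B.runTo y u (a : ℕ) t' = v') ∧
    (∃ y : Fin n → Bool, ∀ u ∈ B.V a, B.runTo y u (a : ℕ) t = v) ∧
    (∀ u ∈ B.V a, B.runTo x u (a : ℕ) t = v)

open scoped BigOperators

namespace ROBP

variable {w n : ℕ} (B : ROBP w n) (x : Fin n → Bool)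

theorem runTo_of_lt {u : Fin w} {i j : ℕ} (hij : i < j) (hin : i < n) :
    B.runTo x u i j = B.runTo x (B.trans ⟨i, hin⟩ (x ⟨i, hin⟩) u) (i + 1) j := by
  rw [runTo, dif_pos ⟨hij, hin⟩]

theorem runTo_of_le {u : Fin w} {i j : ℕ} (h : j ≤ i ∨ n ≤ i) : B.runTo x u i j = u := by
  rw [runTo, dif_neg (by omega)]

theorem runTo_runTo (u : Fin w) {i j k : ℕ} (hij : i ≤ j) (hjk : j ≤ k) :
    B.runTo x (B.runTo x u i j) j k = B.runTo x u i k := by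
  fun_induction B.runTo x u i j with
  | case1 u i h ih => rw [B.runTo_of_lt x (by omega) h.2, ih (by omega)]
  | case2 u i h =>
    rcases Nat.lt_or_ge i n with hin | hni
    · obtain rfl : i = j := by omega
      rfl
    · rw [B.runTo_of_le x (by omega), B.runTo_of_le x (by omega)]

theorem runTo_mem_of_le (u : Fin w) {i j : ℕ} (hij : i ≤ j) (hjn : j < n + 1)
    (hu : u ∈ B.V ⟨i, hij.trans_lt hjn⟩) : B.runTo x u i j ∈ B.V ⟨j, hjn⟩ := by
  fun_induction B.runTo x u i j with
  | case1 u i h ih => exact ih (by omega) (B.trans_mem _ _ u hu)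
  | case2 u i h =>
    obtain rfl : i = j := by omega
    exact hu

theorem runTo_mem {i j : Fin (n + 1)} (hij : i ≤ j) {u : Fin w} (hu : u ∈ B.V i) :
    B.runTo x u i j ∈ B.V j :=
  B.runTo_mem_of_le x u hij j.isLt hu

noncomputable def outcome (i : ℕ) (u : Fin w) : ℝ :=
  if B.accept (B.runTo x u i n) then -1 else 1

theorem abs_outcome (i : ℕ) (u : Fin w) : |B.outcome x i u| = 1 := by
  unfold outcome; split_ifs <;> simp

theorem outcome_runTo (u : Fin w) {i j : ℕ} (hij : i ≤ j) (hjn : j ≤ n) :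
    B.outcome x j (B.runTo x u i j) = B.outcome x i u := by
  rw [outcome, outcome, B.runTo_runTo x u hij hjn]

theorem suffixEval_eq_expect (t : Fin (n + 1)) :
    B.suffixEval t x = 𝔼 u ∈ B.V t, B.outcome x t u :=
  (Finset.expect_eq_sum_div_card _ _).symm

theorem avgEval_eq_suffixEval_zero : B.avgEval x = B.suffixEval 0 x := rfl

theorem abs_suffixEval_le_one (t : Fin (n + 1)) : |B.suffixEval t x| ≤ 1 := by
  have hbound (u) : |B.outcome x t u| ≤ 1 := (B.abs_outcome x t u).le
  rw [suffixEval_eq_expect, abs_le]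
  exact ⟨Finset.le_expect (B.V_nonempty t) fun u _ => (abs_le.mp (hbound u)).1,
    Finset.expect_le (B.V_nonempty t) fun u _ => (abs_le.mp (hbound u)).2⟩

theorem suffixEval_eq_of_outcome_eq {s t : Fin (n + 1)} (hst : s ≤ t) {r : ℝ}
    (h : ∀ u ∈ B.V t, B.outcome x t u = r) : B.suffixEval s x = r := by
  rw [suffixEval_eq_expect, Finset.expect_congr rfl (g := fun _ => r),
    Finset.expect_const (B.V_nonempty s)]
  intro u hu
  rw [← B.outcome_runTo x u hst (Nat.lt_succ_iff.mp t.isLt), h _ (B.runTo_mem x hst hu)]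

theorem suffixEval_eq_zero_of_outcome_ne {t : Fin (n + 1)} (hcard : (B.V t).card ≤ 2)
    {u v : Fin w} (hu : u ∈ B.V t) (hv : v ∈ B.V t) (huv : B.outcome x t u ≠ B.outcome x t v) :
    B.suffixEval t x = 0 := by
  have hne : u ≠ v := by rintro rfl; exact huv rfl
  have hpair : B.V t = {u, v} :=
    (Finset.eq_of_subset_of_card_le (by simp [Finset.insert_subset_iff, hu, hv])
      (hcard.trans (Finset.card_pair hne).ge)).symm
  have hsum : B.outcome x t u + B.outcome x t v = 0 := by
    unfold outcome at huv ⊢; split_ifs at huv ⊢ <;> simp_all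
  rw [suffixEval, hpair, Finset.sum_pair hne]
  exact (congrArg (· / _) hsum).trans (zero_div _)

theorem abs_suffixEval_sub_suffixEval_le_one {s t : Fin (n + 1)} (hst : s ≤ t)
    (hcard : (B.V t).card ≤ 2) : |B.suffixEval s x - B.suffixEval t x| ≤ 1 := by
  obtain ⟨u, hu⟩ := B.V_nonempty t
  by_cases hconst : ∀ v ∈ B.V t, B.outcome x t v = B.outcome x t u
  · rw [B.suffixEval_eq_of_outcome_eq x hst hconst,
      B.suffixEval_eq_of_outcome_eq x le_rfl hconst, sub_self, abs_zero]
    exact zero_le_one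
  · push Not at hconst
    obtain ⟨v, hv, hvu⟩ := hconst
    rw [B.suffixEval_eq_zero_of_outcome_ne x hcard hv hu hvu, sub_zero]
    exact B.abs_suffixEval_le_one x s

theorem FColEvent.exists_outcome_eq {a b : Fin (n + 1)} (hF : B.FColEvent a b x) :
    ∃ r, ∀ u ∈ B.V a, B.outcome x a u = r := by
  obtain ⟨t, v, hat, htb, -, -, hcollide⟩ := hF
  refine ⟨B.outcome x t v, fun u hu => ?_⟩
  rw [← hcollide u hu, B.outcome_runTo x u hat.le (htb.trans (Nat.lt_succ_iff.mp b.isLt))]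

end ROBP

theorem suffix_decomposition_general
    (n m : ℕ) (B : ROBP 3 n)
    (cut : Fin (m + 1) → Fin (n + 1)) (hmono : Monotone cut)
    (hcard : ∀ j, (B.V (cut j)).card ≤ 2)
    (c : Fin (m + 1)) :
    ∃ E : (Fin n → Bool) → ℝ,
      (∀ x, B.avgEval x = B.suffixEval (cut c) x + E x) ∧
      ∀ x, |E x| ≤
        ind (∀ k : Fin m, (c : ℕ) ≤ (k : ℕ) →
          ¬ B.FColEvent (cut k.castSucc) (cut k.succ) x) := by
  refine ⟨fun x => B.suffixEval 0 x - B.suffixEval (cut c) x,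
    fun x => by rw [B.avgEval_eq_suffixEval_zero]; ring, fun x => ?_⟩
  dsimp only
  rw [ind]
  split_ifs with hnoCol
  · exact B.abs_suffixEval_sub_suffixEval_le_one x (Fin.zero_le _) (hcard c)
  · push Not at hnoCol
    obtain ⟨k, hck, hF⟩ := hnoCol
    obtain ⟨r, hr⟩ := hF.exists_outcome_eq
    have hcut : cut c ≤ cut k.castSucc := hmono (Fin.le_def.mpr hck)
    rw [B.suffixEval_eq_of_outcome_eq x ((Fin.zero_le _).trans hcut) hr,
      B.suffixEval_eq_of_outcome_eq x hcut hr, sub_self, abs_zero]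

/-- For a concatenation `B = D₁ ∘ ⋯ ∘ D_m` of width-3 blocks whose
boundary layers have at most `2` vertices (values of two-start programs interpreted as
the average over the two computation paths), for every `j ∈ {2, …, m}` the program
satisfies `B(x) = (D_j ∘ ⋯ ∘ D_m)(x) + E(x)` with
`|E(x)| ≤ ⋀_{i=j}^m ¬ FCol_i(x)`. -/
theorem suffix_decomposition
    (n m : ℕ) (B : ROBP 3 n)
    (cut : Fin (m + 1) → Fin (n + 1)) (hmono : Monotone cut)
    (h0 : cut 0 = 0) (hlast : cut (Fin.last m) = Fin.last n)
    (hcard : ∀ j, (B.V (cut j)).card ≤ 2)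
    (c : Fin (m + 1)) (hc : 0 < (c : ℕ)) :
    ∃ E : (Fin n → Bool) → ℝ,
      (∀ x, B.avgEval x = B.suffixEval (cut c) x + E x) ∧
      ∀ x, |E x| ≤
        ind (∀ k : Fin m, (c : ℕ) ≤ (k : ℕ) →
          ¬ B.FColEvent (cut k.castSucc) (cut k.succ) x) :=
  suffix_decomposition_general n m B cut hmono hcard c
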